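/- arXiv:2603.16042 — 9 statements merged into one kernel-verified Lean document; each statement's English description precedes it below -/
import Mathlib

section
/- Extended descent lemma under relative smoothness: Let E be a real inner product space, Z ⊆ E a convex set, and let f, h : E → ℝ be differentiable on an open set containing Z, with gradients ∇f and ∇h. If L > 0 is such that both x ↦ L·h(x) − f(x) and x ↦ L·h(x) + f(x) are convex on Z, then for all x, y ∈ Z one has |f(x) − f(y) − ⟨∇f(y), x − y⟩| ≤ L·D_h(x, y), where D_h(x, y) := h(x) − h(y) − ⟨∇h(y), x − y⟩. -/
/-! A convex function lies above its tangent at any point of its domain. Applied to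
`L • h - f` and `L • h + f` at `y`, this bounds the first-order remainder of `f` from above
and from below by the Bregman divergence of `L • h`. -/

open RealInnerProductSpace

theorem ConvexOn.apply_sub_le_of_hasFDerivAt {E : Type*} [NormedAddCommGroup E] [NormedSpace ℝ E]
    {s : Set E} {g : E → ℝ} {g' : E →L[ℝ] ℝ} {x y : E} (hg : ConvexOn ℝ s g)
    (hx : x ∈ s) (hy : y ∈ s) (hg' : HasFDerivAt g g' y) :
    g' (x - y) ≤ g x - g y := by
  have hline : ConvexOn ℝ (AffineMap.lineMap (k := ℝ) y x ⁻¹' s)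
      (g ∘ AffineMap.lineMap (k := ℝ) y x) :=
    hg.comp_affineMap _
  have hderiv : HasDerivAt (g ∘ AffineMap.lineMap (k := ℝ) y x) (g' (x - y)) 0 := by
    refine HasFDerivAt.comp_hasDerivAt (0 : ℝ) ?_ AffineMap.hasDerivAt_lineMap
    simpa using hg'
  simpa [slope] using hline.le_slope_of_hasDerivAt (by simpa) (by simpa) one_pos hderiv

theorem abs_sub_sub_le_of_convexOn_sub_of_convexOn_add {E : Type*} [NormedAddCommGroup E]
    [NormedSpace ℝ E] {s : Set E} {f φ : E → ℝ} {f' φ' : E →L[ℝ] ℝ} {x y : E}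
    (hsub : ConvexOn ℝ s (fun z => φ z - f z)) (hadd : ConvexOn ℝ s (fun z => φ z + f z))
    (hx : x ∈ s) (hy : y ∈ s) (hf : HasFDerivAt f f' y) (hφ : HasFDerivAt φ φ' y) :
    |f x - f y - f' (x - y)| ≤ φ x - φ y - φ' (x - y) := by
  have hle := hsub.apply_sub_le_of_hasFDerivAt hx hy (hφ.sub hf)
  have hge := hadd.apply_sub_le_of_hasFDerivAt hx hy (hφ.add hf)
  simp only [sub_apply, add_apply] at hle hge
  rw [abs_le]
  constructor <;> linarith

theorem extended_descent_lemma_general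
    {E : Type*} [NormedAddCommGroup E] [InnerProductSpace ℝ E] [CompleteSpace E]
    (Z U : Set E) (hZU : Z ⊆ U)
    (f h : E → ℝ) (f' h' : E → E)
    (hfgrad : ∀ x ∈ U, HasGradientAt f (f' x) x)
    (hhgrad : ∀ x ∈ U, HasGradientAt h (h' x) x)
    (L : ℝ)
    (hconv₁ : ConvexOn ℝ Z (fun x => L * h x - f x))
    (hconv₂ : ConvexOn ℝ Z (fun x => L * h x + f x)) :
    ∀ x ∈ Z, ∀ y ∈ Z,
      |f x - f y - ⟪f' y, x - y⟫| ≤ L * (h x - h y - ⟪h' y, x - y⟫) := by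
  intro x hx y hy
  have hf := hasGradientAt_iff_hasFDerivAt.mp (hfgrad y (hZU hy))
  have hLh := (hasGradientAt_iff_hasFDerivAt.mp (hhgrad y (hZU hy))).const_mul L
  have hbound := abs_sub_sub_le_of_convexOn_sub_of_convexOn_add hconv₁ hconv₂ hx hy hf hLh
  simp only [InnerProductSpace.toDual_apply_apply, smul_apply, smul_eq_mul] at hbound
  linarith

/-- **Extended descent lemma under relative smoothness.**
If `L • h ± f` are convex on a convex set `Z`, then
`|f x - f y - ⟪∇f y, x - y⟫| ≤ L * D_h(x, y)` for all `x, y ∈ Z`,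
where `D_h(x, y) = h x - h y - ⟪∇h y, x - y⟫`. -/
theorem extended_descent_lemma
    {E : Type*} [NormedAddCommGroup E] [InnerProductSpace ℝ E] [CompleteSpace E]
    (Z U : Set E) (hZconv : Convex ℝ Z) (hUopen : IsOpen U) (hZU : Z ⊆ U)
    (f h : E → ℝ) (f' h' : E → E)
    (hfgrad : ∀ x ∈ U, HasGradientAt f (f' x) x)
    (hhgrad : ∀ x ∈ U, HasGradientAt h (h' x) x)
    (L : ℝ) (hL : 0 < L)
    (hconv₁ : ConvexOn ℝ Z (fun x => L * h x - f x))
    (hconv₂ : ConvexOn ℝ Z (fun x => L * h x + f x)) :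
    ∀ x ∈ Z, ∀ y ∈ Z,
      |f x - f y - ⟪f' y, x - y⟫| ≤ L * (h x - h y - ⟪h' y, x - y⟫) :=
  extended_descent_lemma_general Z U hZU f h f' h' hfgrad hhgrad L hconv₁ hconv₂
end

section
/- Dual Lipschitz continuity: Let E be a finite-dimensional real inner product space, X ⊆ E, and let h satisfy the mirror hypotheses on X with Hessian bounds 0 < μ ≤ 𝓛 (i.e., μ‖v‖² ≤ ⟨∇²h(u)v, v⟩ ≤ 𝓛‖v‖² for all u ∈ X and v ∈ E). Let f be twice continuously differentiable on an open set containing X and suppose there is L > 0 with |⟨∇²f(u)v, v⟩| ≤ L·⟨∇²h(u)v, v⟩ for all u ∈ X and v ∈ E. Then for all x, y ∈ X: ‖∇f(x) − ∇f(y)‖ ≤ L·√(𝓛/μ)·‖∇h(x) − ∇h(y)‖. -/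
open RealInnerProductSpace

/-!
Along the curve `t ↦ g*((1 - t) ∇h(y) + t ∇h(x))`, which stays in `X`, the velocity `v` satisfies
`∇²h(u) v = Δ := ∇h(x) - ∇h(y)`, so by the mean value inequality it suffices to bound `‖∇²f(u) v‖`
whenever `u ∈ X` and `∇²h(u) v = Δ`. Polarizing the relative bound, which needs the symmetry of
`∇²f(u)`, gives `2 ⟪∇²f(u) v, e⟫ ≤ L (⟪∇²h(u) v, v⟫ + ⟪∇²h(u) e, e⟫)`. Taking
`e = (L 𝓛)⁻¹ ∇²f(u) v` and using `μ ⟪∇²h(u) v, v⟫ ≤ ‖Δ‖²` yields `‖∇²f(u) v‖² ≤ L² (𝓛 / μ) ‖Δ‖²`.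
-/

/-- The mirror hypotheses for a kernel `h` with gradient `h'` and Hessian `h''`
on a set `X`: `h` is twice continuously differentiable on an open set containing `X`,
the image `h' '' X` is convex, and there is a continuously differentiable local inverse
`gstar` of the mirror map `h'`, defined on an open set containing `h' '' X`, mapping the
convex hull of `h' '' X` into `X`. -/
structure MirrorHyp {E : Type*} [NormedAddCommGroup E] [InnerProductSpace ℝ E]
    [CompleteSpace E] (h : E → ℝ) (h' : E → E) (h'' : E → E →L[ℝ] E) (X : Set E) where
  U : Set E
  isOpen_U : IsOpen U
  subset_U : X ⊆ U
  grad : ∀ x ∈ U, HasGradientAt h (h' x) x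
  hess : ∀ x ∈ U, HasFDerivAt h' (h'' x) x
  hess_cont : ContinuousOn h'' U
  img_convex : Convex ℝ (h' '' X)
  gstar : E → E
  V : Set E
  isOpen_V : IsOpen V
  img_subset_V : h' '' X ⊆ V
  gstar_contDiff : ContDiffOn ℝ 1 gstar V
  gstar_rightInv : ∀ w ∈ V, h' (gstar w) = w
  gstar_leftInv : ∀ x ∈ X, gstar (h' x) = x
  gstar_maps : ∀ w ∈ convexHull ℝ (h' '' X), gstar w ∈ X

section RelativeBound

variable {E : Type*} [NormedAddCommGroup E] [InnerProductSpace ℝ E]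

lemma two_mul_inner_le_of_abs_inner_self_le {A B : E →L[ℝ] E}
    (hA : (A : E →ₗ[ℝ] E).IsSymmetric) {L : ℝ} (hAB : ∀ v, |⟪A v, v⟫| ≤ L * ⟪B v, v⟫)
    (v e : E) : 2 * ⟪A v, e⟫ ≤ L * (⟪B v, v⟫ + ⟪B e, e⟫) := by
  have hsymm : ⟪A e, v⟫ = ⟪A v, e⟫ := (hA e v).trans (real_inner_comm _ _)
  have hplus := (abs_le.mp (hAB (v + e))).2
  have hminus := (abs_le.mp (hAB (v - e))).1
  simp only [map_add, map_sub, inner_add_left, inner_add_right, inner_sub_left,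
    inner_sub_right, hsymm] at hplus hminus
  linarith

lemma inner_apply_self_le_of_lower_bound {B : E →L[ℝ] E} {μ : ℝ} (hμ : 0 < μ) {v : E}
    (hv : μ * ‖v‖ ^ 2 ≤ ⟪B v, v⟫) : μ * ⟪B v, v⟫ ≤ ‖B v‖ ^ 2 := by
  have hcs : ⟪B v, v⟫ ≤ ‖B v‖ * ‖v‖ := real_inner_le_norm _ _
  have hnorm : μ * ‖v‖ ≤ ‖B v‖ := by
    rcases (norm_nonneg v).eq_or_lt with h0 | hpos
    · rw [← h0, mul_zero]; exact norm_nonneg _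
    · nlinarith
  nlinarith [norm_nonneg (B v), norm_nonneg v]

lemma norm_apply_le_of_abs_inner_self_le {A B : E →L[ℝ] E}
    (hA : (A : E →ₗ[ℝ] E).IsSymmetric) {μ 𝓛 L : ℝ} (hμ : 0 < μ) (hμ𝓛 : μ ≤ 𝓛) (hL : 0 < L)
    (hB : ∀ v, μ * ‖v‖ ^ 2 ≤ ⟪B v, v⟫ ∧ ⟪B v, v⟫ ≤ 𝓛 * ‖v‖ ^ 2)
    (hAB : ∀ v, |⟪A v, v⟫| ≤ L * ⟪B v, v⟫) (v : E) :
    ‖A v‖ ≤ L * Real.sqrt (𝓛 / μ) * ‖B v‖ := by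
  have h𝓛 : 0 < 𝓛 := hμ.trans_le hμ𝓛
  set t := (L * 𝓛)⁻¹
  have ht : 0 < t := by positivity
  have hpolar := two_mul_inner_le_of_abs_inner_self_le hA hAB v (t • A v)
  simp only [map_smul, inner_smul_left, inner_smul_right, real_inner_self_eq_norm_sq,
    conj_trivial] at hpolar
  have hv := inner_apply_self_le_of_lower_bound hμ (hB v).1
  have hAv := (hB (A v)).2
  have hLt : L * 𝓛 * t = 1 := mul_inv_cancel₀ (by positivity)
  have hscaled : t * ‖A v‖ ^ 2 ≤ L * ⟪B v, v⟫ := by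
    have hquad : L * (t * (t * ⟪B (A v), A v⟫)) ≤ t * ‖A v‖ ^ 2 :=
      calc L * (t * (t * ⟪B (A v), A v⟫)) ≤ L * (t * (t * (𝓛 * ‖A v‖ ^ 2))) := by gcongr
        _ = (L * 𝓛 * t) * (t * ‖A v‖ ^ 2) := by ring
        _ = t * ‖A v‖ ^ 2 := by rw [hLt, one_mul]
    linarith
  have hsq : ‖A v‖ ^ 2 ≤ L ^ 2 * (𝓛 / μ) * ‖B v‖ ^ 2 :=
    calc ‖A v‖ ^ 2 = (L * 𝓛) * (t * ‖A v‖ ^ 2) := by rw [← mul_assoc, hLt, one_mul]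
      _ ≤ (L * 𝓛) * (L * ⟪B v, v⟫) := by gcongr
      _ = L ^ 2 * (𝓛 / μ) * (μ * ⟪B v, v⟫) := by field_simp
      _ ≤ L ^ 2 * (𝓛 / μ) * ‖B v‖ ^ 2 := by gcongr
  have hrhs : (L * Real.sqrt (𝓛 / μ) * ‖B v‖) ^ 2 = L ^ 2 * (𝓛 / μ) * ‖B v‖ ^ 2 := by
    rw [mul_pow, mul_pow, Real.sq_sqrt (by positivity)]
  exact (sq_le_sq₀ (norm_nonneg _) (by positivity)).mp (hrhs ▸ hsq)

end RelativeBound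

lemma isSymmetric_of_hasFDerivAt_gradient {E : Type*} [NormedAddCommGroup E]
    [InnerProductSpace ℝ E] [CompleteSpace E] {f : E → ℝ} {f' : E → E} {f'' : E →L[ℝ] E}
    {x : E} (hf : ∀ᶠ y in nhds x, HasGradientAt f (f' y) y) (hf' : HasFDerivAt f' f'' x) :
    (f'' : E →ₗ[ℝ] E).IsSymmetric := by
  set T := (InnerProductSpace.toDual ℝ E).toLinearIsometry.toContinuousLinearMap
  have hsymm := second_derivative_symmetric_of_eventually (f' := fun y => T (f' y))
    hf (T.hasFDerivAt.comp x hf')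
  intro v w
  rw [← real_inner_comm v]
  exact (hsymm w v).symm

namespace MirrorHyp

variable {E : Type*} [NormedAddCommGroup E] [InnerProductSpace ℝ E] [CompleteSpace E]
  {h : E → ℝ} {h' : E → E} {h'' : E → E →L[ℝ] E} {X : Set E}

lemma differentiableAt_gstar (mh : MirrorHyp h h' h'' X) {w : E} (hw : w ∈ mh.V) :
    DifferentiableAt ℝ mh.gstar w :=
  (mh.gstar_contDiff.contDiffAt (mh.isOpen_V.mem_nhds hw)).differentiableAt one_ne_zero

lemma hess_comp_fderiv_gstar (mh : MirrorHyp h h' h'' X) {w : E} (hw : w ∈ mh.V)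
    (hgw : mh.gstar w ∈ mh.U) :
    (h'' (mh.gstar w)).comp (fderiv ℝ mh.gstar w) = ContinuousLinearMap.id ℝ E := by
  refine ((mh.hess _ hgw).comp w (mh.differentiableAt_gstar hw).hasFDerivAt).unique
    ((hasFDerivAt_id w).congr_of_eventuallyEq ?_)
  filter_upwards [mh.isOpen_V.mem_nhds hw] with u hu
  exact mh.gstar_rightInv u hu

theorem norm_sub_le_of_forall_hess_apply_eq (mh : MirrorHyp h h' h'' X)
    {G : Type*} [NormedAddCommGroup G] [NormedSpace ℝ G] {F : E → G} {F' : E → E →L[ℝ] G}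
    (hF : ∀ u ∈ X, HasFDerivAt F (F' u) u) {x y : E} (hx : x ∈ X) (hy : y ∈ X) {C : ℝ}
    (hC : ∀ u ∈ X, ∀ v, h'' u v = h' x - h' y → ‖F' u v‖ ≤ C) :
    ‖F x - F y‖ ≤ C := by
  set w : ℝ → E := ⇑(AffineMap.lineMap (k := ℝ) (h' y) (h' x))
  have hwX : ∀ t ∈ Set.Icc (0 : ℝ) 1, w t ∈ h' '' X := fun t ht =>
    mh.img_convex.lineMap_mem (Set.mem_image_of_mem h' hy) (Set.mem_image_of_mem h' hx) ht
  have hwV : ∀ t ∈ Set.Icc (0 : ℝ) 1, w t ∈ mh.V := fun t ht => mh.img_subset_V (hwX t ht)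
  have hcX : ∀ t ∈ Set.Icc (0 : ℝ) 1, mh.gstar (w t) ∈ X := fun t ht =>
    mh.gstar_maps _ (subset_convexHull ℝ _ (hwX t ht))
  have hderiv : ∀ t ∈ Set.Icc (0 : ℝ) 1, HasDerivAt (fun s => F (mh.gstar (w s)))
      (F' (mh.gstar (w t)) (fderiv ℝ mh.gstar (w t) (h' x - h' y))) t := fun t ht =>
    (hF _ (hcX t ht)).comp_hasDerivAt t
      ((mh.differentiableAt_gstar (hwV t ht)).hasFDerivAt.comp_hasDerivAt t
        AffineMap.hasDerivAt_lineMap)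
  have hbound : ∀ t ∈ Set.Ico (0 : ℝ) 1,
      ‖F' (mh.gstar (w t)) (fderiv ℝ mh.gstar (w t) (h' x - h' y))‖ ≤ C := by
    intro t ht
    have ht' := Set.Ico_subset_Icc_self ht
    refine hC _ (hcX t ht') _ ?_
    exact congrArg (· (h' x - h' y))
      (mh.hess_comp_fderiv_gstar (hwV t ht') (mh.subset_U (hcX t ht')))
  simpa [w, mh.gstar_leftInv x hx, mh.gstar_leftInv y hy] using
    norm_image_sub_le_of_norm_deriv_le_segment_01' (fun t ht => (hderiv t ht).hasDerivWithinAt)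
      hbound

end MirrorHyp

theorem dual_lipschitz_continuity_general
    {E : Type*} [NormedAddCommGroup E] [InnerProductSpace ℝ E] [FiniteDimensional ℝ E]
    (X : Set E) (h : E → ℝ) (h' : E → E) (h'' : E → E →L[ℝ] E)
    (mh : MirrorHyp h h' h'' X)
    (μ 𝓛 : ℝ) (hμ : 0 < μ) (hμ𝓛 : μ ≤ 𝓛)
    (hbound : ∀ u ∈ X, ∀ v : E,
      μ * ‖v‖ ^ 2 ≤ ⟪h'' u v, v⟫ ∧ ⟪h'' u v, v⟫ ≤ 𝓛 * ‖v‖ ^ 2)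
    (f : E → ℝ) (f' : E → E) (f'' : E → E →L[ℝ] E)
    (W : Set E) (hWopen : IsOpen W) (hXW : X ⊆ W)
    (hfgrad : ∀ x ∈ W, HasGradientAt f (f' x) x)
    (hfhess : ∀ x ∈ W, HasFDerivAt f' (f'' x) x)
    (L : ℝ) (hL : 0 < L)
    (hrel : ∀ u ∈ X, ∀ v : E, |⟪f'' u v, v⟫| ≤ L * ⟪h'' u v, v⟫) :
    ∀ x ∈ X, ∀ y ∈ X,
      ‖f' x - f' y‖ ≤ L * Real.sqrt (𝓛 / μ) * ‖h' x - h' y‖ := by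
  intro x hx y hy
  refine mh.norm_sub_le_of_forall_hess_apply_eq (fun u hu => hfhess u (hXW hu)) hx hy ?_
  intro u hu v hv
  have hsymm : (f'' u : E →ₗ[ℝ] E).IsSymmetric :=
    isSymmetric_of_hasFDerivAt_gradient
      (Filter.mem_of_superset (hWopen.mem_nhds (hXW hu)) hfgrad) (hfhess u (hXW hu))
  rw [← hv]
  exact norm_apply_le_of_abs_inner_self_le hsymm hμ hμ𝓛 hL (hbound u hu) (hrel u hu) v

/-- **Dual Lipschitz continuity.** If `f` is `L`-smooth relative to `h`
(in the Hessian sense `|⟪∇²f(u)v, v⟫| ≤ L ⟪∇²h(u)v, v⟫` on `X`) and the kernel Hessian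
satisfies `μ ‖v‖² ≤ ⟪∇²h(u)v, v⟫ ≤ 𝓛 ‖v‖²` on `X`, then the gradient of `f` is Lipschitz
with constant `L √(𝓛/μ)` with respect to the dual distance `ρ_h(x,y) = ‖∇h x - ∇h y‖`. -/
theorem dual_lipschitz_continuity
    {E : Type*} [NormedAddCommGroup E] [InnerProductSpace ℝ E] [FiniteDimensional ℝ E]
    (X : Set E) (h : E → ℝ) (h' : E → E) (h'' : E → E →L[ℝ] E)
    (mh : MirrorHyp h h' h'' X)
    (μ 𝓛 : ℝ) (hμ : 0 < μ) (hμ𝓛 : μ ≤ 𝓛)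
    (hbound : ∀ u ∈ X, ∀ v : E,
      μ * ‖v‖ ^ 2 ≤ ⟪h'' u v, v⟫ ∧ ⟪h'' u v, v⟫ ≤ 𝓛 * ‖v‖ ^ 2)
    (f : E → ℝ) (f' : E → E) (f'' : E → E →L[ℝ] E)
    (W : Set E) (hWopen : IsOpen W) (hXW : X ⊆ W)
    (hfgrad : ∀ x ∈ W, HasGradientAt f (f' x) x)
    (hfhess : ∀ x ∈ W, HasFDerivAt f' (f'' x) x)
    (hfcont : ContinuousOn f'' W)
    (L : ℝ) (hL : 0 < L)
    (hrel : ∀ u ∈ X, ∀ v : E, |⟪f'' u v, v⟫| ≤ L * ⟪h'' u v, v⟫) :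
    ∀ x ∈ X, ∀ y ∈ X,
      ‖f' x - f' y‖ ≤ L * Real.sqrt (𝓛 / μ) * ‖h' x - h' y‖ :=
  dual_lipschitz_continuity_general X h h' h'' mh μ 𝓛 hμ hμ𝓛 hbound f f' f'' W hWopen hXW hfgrad
    hfhess L hL hrel
end

section
/- Bregman quasi-triangle inequality: Let E be a finite-dimensional real inner product space, X ⊆ E, and let h satisfy the mirror hypotheses on X with Hessian bounds 0 < μ ≤ 𝓛, and set κ := 𝓛/μ (so κ ≥ 1). Then for all x, w, v ∈ X: D_h(x, v) ≤ 2κ·D_h(x, w) + 2κ·D_h(w, v), where D_h(a, b) := h(a) − h(b) − ⟨∇h(b), a − b⟩. -/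
open RealInnerProductSpace

/-- The Bregman divergence `D_h(x, y) = h x - h y - ⟪∇h y, x - y⟫`. -/
noncomputable def bregman {E : Type*} [NormedAddCommGroup E] [InnerProductSpace ℝ E]
    (h : E → ℝ) (h' : E → E) (x y : E) : ℝ :=
  h x - h y - ⟪h' y, x - y⟫

/-!
`X` need not be convex, but `∇h(X)` is, so we argue on the dual side. The Legendre conjugate
`h* y = ⟪y, g* y⟫ - h (g* y)` has gradient `g*` on `∇h(X)`, and the Bregman divergence is
self-dual: `D_h(p, q) = D_{h*}(∇h q, ∇h p)`. Along the segment from `∇h p` to `∇h q` (direction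
`u`), the second derivative of `h*` is `⟪Dg* u, u⟫` with `Dg* = (∇²h)⁻¹`, which lies between
`‖u‖²/𝓛` and `‖u‖²/μ`. Taylor's formula then gives
`‖∇h q - ∇h p‖²/(2𝓛) ≤ D_h(p, q) ≤ ‖∇h q - ∇h p‖²/(2μ)`, and the theorem follows from
`‖a - c‖² ≤ 2‖a - b‖² + 2‖b - c‖²`.
-/

open Set

theorem sub_le_sub_of_hasDerivAt_le {f g f' g' : ℝ → ℝ} {a b : ℝ} (hab : a ≤ b)
    (hf : ∀ t ∈ Icc a b, HasDerivAt f (f' t) t) (hg : ∀ t ∈ Icc a b, HasDerivAt g (g' t) t)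
    (hle : ∀ t ∈ Icc a b, f' t ≤ g' t) : f b - f a ≤ g b - g a := by
  have hmono : MonotoneOn (fun t => g t - f t) (Icc a b) :=
    monotoneOn_of_hasDerivWithinAt_nonneg (convex_Icc a b)
      (fun t ht => ((hg t ht).sub (hf t ht)).continuousAt.continuousWithinAt)
      (fun t ht => ((hg t (interior_subset ht)).sub (hf t (interior_subset ht))).hasDerivWithinAt)
      (fun t ht => sub_nonneg.2 (hle t (interior_subset ht)))
  linarith [hmono (left_mem_Icc.2 hab) (right_mem_Icc.2 hab) hab]

theorem sub_sub_deriv_mul_le {f f' f'' : ℝ → ℝ} {a b M : ℝ} (hab : a ≤ b)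
    (hf : ∀ t ∈ Icc a b, HasDerivAt f (f' t) t) (hf' : ∀ t ∈ Icc a b, HasDerivAt f' (f'' t) t)
    (hM : ∀ t ∈ Icc a b, f'' t ≤ M) :
    f b - f a - f' a * (b - a) ≤ M * (b - a) ^ 2 / 2 := by
  have hslope : ∀ t ∈ Icc a b, f' t - f' a ≤ t * M - a * M := fun t ht =>
    sub_le_sub_of_hasDerivAt_le ht.1 (fun s hs => hf' s ⟨hs.1, hs.2.trans ht.2⟩)
      (fun s _ => hasDerivAt_mul_const M) (fun s hs => hM s ⟨hs.1, hs.2.trans ht.2⟩)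
  have := sub_le_sub_of_hasDerivAt_le hab (f := fun t => f t - t * f' a)
    (g := fun t => M * (t - a) ^ 2 / 2)
    (fun t ht => (hf t ht).sub (hasDerivAt_mul_const (f' a)))
    (fun t _ => (((hasDerivAt_id t).sub_const a).pow 2 |>.const_mul M |>.div_const 2))
    (fun t ht => by simp only [id]; linarith [hslope t ht])
  linarith

theorem le_sub_sub_deriv_mul {f f' f'' : ℝ → ℝ} {a b m : ℝ} (hab : a ≤ b)
    (hf : ∀ t ∈ Icc a b, HasDerivAt f (f' t) t) (hf' : ∀ t ∈ Icc a b, HasDerivAt f' (f'' t) t)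
    (hm : ∀ t ∈ Icc a b, m ≤ f'' t) :
    m * (b - a) ^ 2 / 2 ≤ f b - f a - f' a * (b - a) := by
  have := sub_sub_deriv_mul_le (f := -f) (f' := -f') (M := -m) hab (fun t ht => (hf t ht).neg)
    (fun t ht => (hf' t ht).neg) (fun t ht => neg_le_neg (hm t ht))
  simp only [Pi.neg_apply] at this
  linarith

section InnerProductSpace

variable {E : Type*} [NormedAddCommGroup E] [InnerProductSpace ℝ E]

theorem hasDerivAt_add_smul (b u : E) (t : ℝ) : HasDerivAt (fun s : ℝ => b + s • u) u t := by
  simpa using ((hasDerivAt_id t).smul_const u).const_add b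

theorem mul_real_inner_le_norm_sq_of_mul_norm_sq_le {x y : E} {μ : ℝ} (hμ : 0 ≤ μ)
    (h : μ * ‖x‖ ^ 2 ≤ ⟪y, x⟫) : μ * ⟪y, x⟫ ≤ ‖y‖ ^ 2 := by
  rcases eq_or_ne x 0 with rfl | hx
  · simp
  · have hx : 0 < ‖x‖ := norm_pos_iff.2 hx
    have hcs := real_inner_le_norm y x
    have hμx : μ * ‖x‖ ≤ ‖y‖ := le_of_mul_le_mul_right (by nlinarith) hx
    nlinarith [norm_nonneg y]

theorem ContinuousLinearMap.IsPositive.inner_apply_sq_le {A : E →L[ℝ] E} (hA : A.IsPositive)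
    (x y : E) : ⟪A x, y⟫ ^ 2 ≤ ⟪A x, x⟫ * ⟪A y, y⟫ := by
  have := discrim_le_zero (a := ⟪A y, y⟫) (b := 2 * ⟪A x, y⟫) (c := ⟪A x, x⟫) fun t => by
    have hsymm : ⟪A y, x⟫ = ⟪A x, y⟫ := by rw [hA.inner_left_eq_inner_right, real_inner_comm]
    have := hA.inner_nonneg_left (x + t • y)
    simp only [map_add, map_smul, inner_add_left, inner_add_right, real_inner_smul_left,
      real_inner_smul_right, hsymm] at this
    linarith
  rw [discrim] at this
  linarith

theorem ContinuousLinearMap.IsPositive.norm_apply_sq_le {A : E →L[ℝ] E} (hA : A.IsPositive)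
    {L : ℝ} (hL : ∀ z, ⟪A z, z⟫ ≤ L * ‖z‖ ^ 2) (v : E) : ‖A v‖ ^ 2 ≤ L * ⟪A v, v⟫ := by
  -- Cauchy–Schwarz for `⟪A ·, ·⟫`: `‖A v‖⁴ ≤ ⟪A v, v⟫ ⟪A (A v), A v⟫ ≤ ⟪A v, v⟫ L ‖A v‖²`.
  have hcs := hA.inner_apply_sq_le v (A v)
  rw [real_inner_self_eq_norm_sq] at hcs
  have := mul_le_mul_of_nonneg_left (hL (A v)) (hA.inner_nonneg_left v)
  rcases eq_or_ne (A v) 0 with h0 | h0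
  · simp [h0]
  · have : 0 < ‖A v‖ ^ 2 := by positivity
    nlinarith

end InnerProductSpace

namespace MirrorHyp

variable {E : Type*} [NormedAddCommGroup E] [InnerProductSpace ℝ E] [CompleteSpace E]
  {h : E → ℝ} {h' : E → E} {h'' : E → E →L[ℝ] E} {X : Set E} (mh : MirrorHyp h h' h'' X)

theorem gstar_mem {y : E} (hy : y ∈ h' '' X) : mh.gstar y ∈ X :=
  mh.gstar_maps y (subset_convexHull ℝ _ hy)

theorem isSymmetric_hessian {u : E} (hu : u ∈ mh.U) : (h'' u).IsSymmetric := by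
  let toDual := (InnerProductSpace.toDual ℝ E).toContinuousLinearEquiv.toContinuousLinearMap
  have hfderiv : ∀ᶠ y in nhds u, HasFDerivAt h (toDual (h' y)) y := by
    filter_upwards [mh.isOpen_U.mem_nhds hu] with y hy
    exact (mh.grad y hy).hasFDerivAt
  intro a b
  have := second_derivative_symmetric_of_eventually_of_real hfderiv
    (toDual.hasFDerivAt.comp u (mh.hess u hu)) a b
  simpa [toDual, InnerProductSpace.toDual_apply_apply, real_inner_comm] using this

theorem hasFDerivAt_gstar {y : E} (hy : y ∈ h' '' X) :
    HasFDerivAt mh.gstar (fderiv ℝ mh.gstar y) y :=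
  ((mh.gstar_contDiff.differentiableOn one_ne_zero).differentiableAt
    (mh.isOpen_V.mem_nhds (mh.img_subset_V hy))).hasFDerivAt

theorem hessian_fderiv_gstar_apply {y : E} (hy : y ∈ h' '' X) (z : E) :
    h'' (mh.gstar y) (fderiv ℝ mh.gstar y z) = z := by
  have hcomp : HasFDerivAt (h' ∘ mh.gstar) ((h'' (mh.gstar y)).comp (fderiv ℝ mh.gstar y)) y :=
    (mh.hess _ (mh.subset_U (mh.gstar_mem hy))).comp y (mh.hasFDerivAt_gstar hy)
  have hid : h' ∘ mh.gstar =ᶠ[nhds y] id := by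
    filter_upwards [mh.isOpen_V.mem_nhds (mh.img_subset_V hy)] with w hw
    exact mh.gstar_rightInv w hw
  exact congrArg (· z) ((hcomp.congr_of_eventuallyEq hid.symm).unique (hasFDerivAt_id y))

def conjugate (y : E) : ℝ :=
  ⟪y, mh.gstar y⟫ - h (mh.gstar y)

theorem hasGradientAt_conjugate {y : E} (hy : y ∈ h' '' X) :
    HasGradientAt mh.conjugate (mh.gstar y) y := by
  have hgrad := mh.grad _ (mh.subset_U (mh.gstar_mem hy))
  rw [mh.gstar_rightInv y (mh.img_subset_V hy)] at hgrad
  have hg := mh.hasFDerivAt_gstar hy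
  refine hasGradientAt_iff_hasFDerivAt.2
    ((((hasFDerivAt_id y).inner ℝ hg).sub (hgrad.hasFDerivAt.comp y hg)).congr_fderiv ?_)
  ext z
  simp [fderivInnerCLM_apply, real_inner_comm]

theorem bregman_eq_bregman_conjugate {p q : E} (hp : p ∈ X) (hq : q ∈ X) :
    bregman h h' p q = bregman mh.conjugate mh.gstar (h' q) (h' p) := by
  simp only [bregman, conjugate, mh.gstar_leftInv p hp, mh.gstar_leftInv q hq,
    inner_sub_right, real_inner_comm p]
  ring

variable {b u : E} {t : ℝ}

theorem hasDerivAt_conjugate_line (hy : b + t • u ∈ h' '' X) :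
    HasDerivAt (fun s : ℝ => mh.conjugate (b + s • u)) ⟪mh.gstar (b + t • u), u⟫ t := by
  exact (mh.hasGradientAt_conjugate hy).hasFDerivAt.comp_hasDerivAt t (hasDerivAt_add_smul b u t)

theorem hasDerivAt_inner_gstar_line (hy : b + t • u ∈ h' '' X) :
    HasDerivAt (fun s : ℝ => ⟪mh.gstar (b + s • u), u⟫)
      ⟪fderiv ℝ mh.gstar (b + t • u) u, u⟫ t := by
  simpa using ((mh.hasFDerivAt_gstar hy).comp_hasDerivAt t (hasDerivAt_add_smul b u t)).inner ℝ
    (hasDerivAt_const t u)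

theorem mul_inner_fderiv_gstar_le {y : E} (hy : y ∈ h' '' X) {μ : ℝ} (hμ : 0 ≤ μ)
    (hlow : ∀ v, μ * ‖v‖ ^ 2 ≤ ⟪h'' (mh.gstar y) v, v⟫) (u : E) :
    μ * ⟪fderiv ℝ mh.gstar y u, u⟫ ≤ ‖u‖ ^ 2 := by
  have := mul_real_inner_le_norm_sq_of_mul_norm_sq_le hμ (hlow (fderiv ℝ mh.gstar y u))
  rwa [mh.hessian_fderiv_gstar_apply hy, real_inner_comm] at this

theorem norm_sq_le_mul_inner_fderiv_gstar {y : E} (hy : y ∈ h' '' X) {L : ℝ}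
    (hpos : ∀ v, 0 ≤ ⟪h'' (mh.gstar y) v, v⟫)
    (hup : ∀ v, ⟪h'' (mh.gstar y) v, v⟫ ≤ L * ‖v‖ ^ 2) (u : E) :
    ‖u‖ ^ 2 ≤ L * ⟪fderiv ℝ mh.gstar y u, u⟫ := by
  have hA : (h'' (mh.gstar y)).IsPositive := (ContinuousLinearMap.isPositive_iff _).2
    ⟨mh.isSymmetric_hessian (mh.subset_U (mh.gstar_mem hy)), hpos⟩
  have := hA.norm_apply_sq_le hup (fderiv ℝ mh.gstar y u)
  rwa [mh.hessian_fderiv_gstar_apply hy, real_inner_comm] at this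

variable {a : E}

theorem bregman_conjugate_le_norm_sq_div (ha : a ∈ h' '' X) (hb : b ∈ h' '' X) {μ : ℝ}
    (hμ : 0 < μ) (hlow : ∀ x ∈ X, ∀ v, μ * ‖v‖ ^ 2 ≤ ⟪h'' x v, v⟫) :
    bregman mh.conjugate mh.gstar a b ≤ ‖a - b‖ ^ 2 / (2 * μ) := by
  have hseg (t : ℝ) (ht : t ∈ Icc 0 1) : b + t • (a - b) ∈ h' '' X :=
    mh.img_convex.add_smul_sub_mem hb ha ht
  have := sub_sub_deriv_mul_le zero_le_one (M := ‖a - b‖ ^ 2 / μ)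
    (fun t ht => mh.hasDerivAt_conjugate_line (hseg t ht))
    (fun t ht => mh.hasDerivAt_inner_gstar_line (hseg t ht))
    (fun t ht => (le_div_iff₀' hμ).2 <| mh.mul_inner_fderiv_gstar_le (hseg t ht) hμ.le
      (hlow _ (mh.gstar_mem (hseg t ht))) _)
  simp only [one_smul, zero_smul, add_zero, add_sub_cancel, sub_zero, mul_one, one_pow] at this
  rw [bregman]
  linarith [show ‖a - b‖ ^ 2 / μ / 2 = ‖a - b‖ ^ 2 / (2 * μ) by ring]

theorem norm_sq_div_le_bregman_conjugate (ha : a ∈ h' '' X) (hb : b ∈ h' '' X) {L : ℝ}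
    (hL : 0 < L) (hpos : ∀ x ∈ X, ∀ v, 0 ≤ ⟪h'' x v, v⟫)
    (hup : ∀ x ∈ X, ∀ v, ⟪h'' x v, v⟫ ≤ L * ‖v‖ ^ 2) :
    ‖a - b‖ ^ 2 / (2 * L) ≤ bregman mh.conjugate mh.gstar a b := by
  have hseg (t : ℝ) (ht : t ∈ Icc 0 1) : b + t • (a - b) ∈ h' '' X :=
    mh.img_convex.add_smul_sub_mem hb ha ht
  have := le_sub_sub_deriv_mul zero_le_one (m := ‖a - b‖ ^ 2 / L)
    (fun t ht => mh.hasDerivAt_conjugate_line (hseg t ht))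
    (fun t ht => mh.hasDerivAt_inner_gstar_line (hseg t ht))
    (fun t ht => (div_le_iff₀' hL).2 <| mh.norm_sq_le_mul_inner_fderiv_gstar (hseg t ht)
      (hpos _ (mh.gstar_mem (hseg t ht))) (hup _ (mh.gstar_mem (hseg t ht))) _)
  simp only [one_smul, zero_smul, add_zero, add_sub_cancel, sub_zero, mul_one, one_pow] at this
  rw [bregman]
  linarith [show ‖a - b‖ ^ 2 / L / 2 = ‖a - b‖ ^ 2 / (2 * L) by ring]

end MirrorHyp

/-- **Bregman quasi-triangle inequality.** Under the mirror hypotheses with Hessian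
bounds `0 < μ ≤ 𝓛` on `X` and `κ = 𝓛/μ`, for all `x, w, v ∈ X`:
`D_h(x, v) ≤ 2κ D_h(x, w) + 2κ D_h(w, v)`. -/
theorem bregman_quasi_triangle
    {E : Type*} [NormedAddCommGroup E] [InnerProductSpace ℝ E] [FiniteDimensional ℝ E]
    (X : Set E) (h : E → ℝ) (h' : E → E) (h'' : E → E →L[ℝ] E)
    (mh : MirrorHyp h h' h'' X)
    (μ 𝓛 : ℝ) (hμ : 0 < μ) (hμ𝓛 : μ ≤ 𝓛)
    (hbound : ∀ u ∈ X, ∀ v : E,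
      μ * ‖v‖ ^ 2 ≤ ⟪h'' u v, v⟫ ∧ ⟪h'' u v, v⟫ ≤ 𝓛 * ‖v‖ ^ 2) :
    ∀ x ∈ X, ∀ w ∈ X, ∀ v ∈ X,
      bregman h h' x v ≤
        2 * (𝓛 / μ) * bregman h h' x w + 2 * (𝓛 / μ) * bregman h h' w v := by
  intro x hx w hw v hv
  have h𝓛 : 0 < 𝓛 := hμ.trans_le hμ𝓛
  have hpos (u : E) (hu : u ∈ X) (z : E) : 0 ≤ ⟪h'' u z, z⟫ :=
    (mul_nonneg hμ.le (sq_nonneg _)).trans (hbound u hu z).1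
  have hup (u : E) (hu : u ∈ X) (z : E) : ⟪h'' u z, z⟫ ≤ 𝓛 * ‖z‖ ^ 2 := (hbound u hu z).2
  rw [mh.bregman_eq_bregman_conjugate hx hv, mh.bregman_eq_bregman_conjugate hx hw,
    mh.bregman_eq_bregman_conjugate hw hv]
  have hxv := mh.bregman_conjugate_le_norm_sq_div (mem_image_of_mem h' hv)
    (mem_image_of_mem h' hx) hμ fun u hu z => (hbound u hu z).1
  have hxw := mh.norm_sq_div_le_bregman_conjugate (mem_image_of_mem h' hw)
    (mem_image_of_mem h' hx) h𝓛 hpos hup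
  have hwv := mh.norm_sq_div_le_bregman_conjugate (mem_image_of_mem h' hv)
    (mem_image_of_mem h' hw) h𝓛 hpos hup
  have htri : ‖h' v - h' x‖ ^ 2 ≤ 2 * (‖h' w - h' x‖ ^ 2 + ‖h' v - h' w‖ ^ 2) :=
    calc ‖h' v - h' x‖ ^ 2 ≤ (‖h' w - h' x‖ + ‖h' v - h' w‖) ^ 2 := by
          gcongr
          rw [add_comm]
          exact norm_sub_le_norm_sub_add_norm_sub _ _ _
      _ ≤ _ := add_sq_le
  calc _ ≤ 2 * (‖h' w - h' x‖ ^ 2 + ‖h' v - h' w‖ ^ 2) / (2 * μ) := by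
        grw [hxv, htri]
    _ = 2 * (𝓛 / μ) * (‖h' w - h' x‖ ^ 2 / (2 * 𝓛) + ‖h' v - h' w‖ ^ 2 / (2 * 𝓛)) := by
        field_simp
    _ ≤ _ := by
        rw [← mul_add]
        gcongr
end

section
/- DKC regularity of the regularized Burg entropy: Fix σ > 0 and let h(t) = −log t + (σ/2)t² on (0, ∞), so h′(t) = −1/t + σt and h″(t) = 1/t² + σ. For every δ > 0 and all y, z > 0 with |h′(y) − h′(z)| ≤ δ: (i) y/z + z/y ≤ 2 + δ²/σ; and (ii) h″(y)/h″(z) ≤ 1 + (2 + δ²/σ)². -/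
/-!
Since `h'(y) - h'(z) = (y - z) (1/(yz) + σ)` and `(1/(yz) + σ)² ≥ σ/(yz)`, the hypothesis
`|h'(y) - h'(z)| ≤ δ` gives `(y - z)²/(yz) ≤ δ²/σ`, which is (i) because
`y/z + z/y = 2 + (y - z)²/(yz)`. Then `z/y ≤ M := 2 + δ²/σ`, so `1/y² ≤ M²/z²` and (ii) follows.
-/

open Real

lemma hasDerivAt_neg_log_add_mul_sq (σ : ℝ) {t : ℝ} (ht : t ≠ 0) :
    HasDerivAt (fun s : ℝ => -log s + σ / 2 * s ^ 2) (-(1 / t) + σ * t) t := by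
  refine ((hasDerivAt_log ht).neg.add ((hasDerivAt_pow 2 t).const_mul (σ / 2))).congr_deriv ?_
  field_simp
  norm_num
  ring

lemma hasDerivAt_neg_one_div_add_mul (σ : ℝ) {t : ℝ} (ht : t ≠ 0) :
    HasDerivAt (fun s : ℝ => -(1 / s) + σ * s) (1 / t ^ 2 + σ) t := by
  simp only [one_div]
  refine ((hasDerivAt_inv ht).neg.add ((hasDerivAt_id t).const_mul σ)).congr_deriv ?_
  field_simp

lemma neg_one_div_add_mul_sub {y z : ℝ} (σ : ℝ) (hy : y ≠ 0) (hz : z ≠ 0) :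
    (-(1 / y) + σ * y) - (-(1 / z) + σ * z) = (y - z) * (1 / (y * z) + σ) := by
  field_simp
  ring

lemma div_add_div_eq_two_add_sq_sub_div {y z : ℝ} (hy : y ≠ 0) (hz : z ≠ 0) :
    y / z + z / y = 2 + (y - z) ^ 2 / (y * z) := by
  field_simp
  ring

lemma sq_sub_div_mul_le_of_abs_sub_le {σ δ y z : ℝ} (hσ : 0 < σ) (hy : 0 < y) (hz : 0 < z)
    (hδ : |(-(1 / y) + σ * y) - (-(1 / z) + σ * z)| ≤ δ) :
    (y - z) ^ 2 / (y * z) ≤ δ ^ 2 / σ := by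
  set a := 1 / (y * z) with ha
  have ha_pos : 0 < a := by positivity
  rw [neg_one_div_add_mul_sub σ hy.ne' hz.ne', abs_mul, abs_of_pos (by positivity : 0 < a + σ)]
    at hδ
  have hsq : (y - z) ^ 2 * (a + σ) ^ 2 ≤ δ ^ 2 := by
    rw [← sq_abs (y - z), ← mul_pow]
    exact pow_le_pow_left₀ (by positivity) hδ 2
  rw [div_eq_mul_one_div, ← ha, le_div_iff₀ hσ]
  calc (y - z) ^ 2 * a * σ ≤ (y - z) ^ 2 * (a + σ) ^ 2 := by
        rw [mul_assoc]
        gcongr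
        nlinarith
    _ ≤ δ ^ 2 := hsq

lemma one_div_sq_add_div_le {σ M y z : ℝ} (hσ : 0 ≤ σ) (hy : 0 < y) (hz : 0 < z)
    (hM : z / y ≤ M) :
    (1 / y ^ 2 + σ) / (1 / z ^ 2 + σ) ≤ 1 + M ^ 2 := by
  have hinv : 1 / y ^ 2 ≤ M ^ 2 * (1 / z ^ 2) := by
    calc 1 / y ^ 2 = (z / y) ^ 2 * (1 / z ^ 2) := by field_simp
      _ ≤ M ^ 2 * (1 / z ^ 2) := by gcongr
  rw [div_le_iff₀ (by positivity)]
  nlinarith [sq_nonneg M, (by positivity : 0 ≤ 1 / z ^ 2)]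

/-- **DKC regularity of the regularized Burg entropy** `h(t) = -log t + (σ/2) t²` on
`(0, ∞)` with `σ > 0`: `h'(t) = -1/t + σ t`, `h''(t) = 1/t² + σ`, and for every `δ > 0`
and all `y, z > 0` with `|h'(y) - h'(z)| ≤ δ`:
(i) `y/z + z/y ≤ 2 + δ²/σ`; (ii) `h''(y)/h''(z) ≤ 1 + (2 + δ²/σ)²`. -/
theorem burg_entropy_dkc (σ : ℝ) (hσ : 0 < σ) :
    (∀ t : ℝ, 0 < t →
      HasDerivAt (fun s : ℝ => -Real.log s + σ / 2 * s ^ 2) (-(1 / t) + σ * t) t) ∧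
    (∀ t : ℝ, 0 < t →
      HasDerivAt (fun s : ℝ => -(1 / s) + σ * s) (1 / t ^ 2 + σ) t) ∧
    (∀ δ : ℝ, 0 < δ → ∀ y z : ℝ, 0 < y → 0 < z →
      |(-(1 / y) + σ * y) - (-(1 / z) + σ * z)| ≤ δ →
      y / z + z / y ≤ 2 + δ ^ 2 / σ ∧
      (1 / y ^ 2 + σ) / (1 / z ^ 2 + σ) ≤ 1 + (2 + δ ^ 2 / σ) ^ 2) := by
  refine ⟨fun t ht => hasDerivAt_neg_log_add_mul_sq σ ht.ne',
    fun t ht => hasDerivAt_neg_one_div_add_mul σ ht.ne', fun δ _ y z hy hz hδ => ?_⟩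
  have hratio : y / z + z / y ≤ 2 + δ ^ 2 / σ := by
    rw [div_add_div_eq_two_add_sq_sub_div hy.ne' hz.ne']
    linarith [sq_sub_div_mul_le_of_abs_sub_le hσ hy hz hδ]
  have hzy : z / y ≤ 2 + δ ^ 2 / σ := by linarith [div_pos hy hz]
  exact ⟨hratio, one_div_sq_add_div_le hσ.le hy hz hzy⟩
end

section
/- DKC regularity of the Fermi–Dirac entropy: Let h(t) = t·log t + (1 − t)·log(1 − t) on (0, 1), so h′(t) = log(t/(1 − t)) and h″(t) = 1/(t(1 − t)). For every δ > 0 and all y, z ∈ (0, 1) with |log(z/(1 − z)) − log(y/(1 − y))| ≤ δ, it holds that |log(z(1 − z)) − log(y(1 − y))| ≤ δ, and consequently h″(y)/h″(z) ≤ exp(δ). -/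
/-!
The Fermi–Dirac entropy is minus the binary entropy, which gives `h'`, and `h'' = 1/(t(1-t))`
follows from the quotient rule. For the DKC bound write `a = log z - log y` and
`b = log (1-z) - log (1-y)`. Then `h'(z) - h'(y) = a - b` while `log h''(y) - log h''(z) = a + b`;
since `log` is increasing and `log (1 - ·)` decreasing, `a` and `b` have opposite signs, so
`|a + b| ≤ |a - b|`.
-/

open Real Set

theorem hasDerivAt_mul_log_add_one_sub_mul_log_one_sub {t : ℝ} (ht₀ : t ≠ 0) (ht₁ : t ≠ 1) :
    HasDerivAt (fun s : ℝ => s * log s + (1 - s) * log (1 - s)) (log (t / (1 - t))) t := by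
  have h_eq : (fun s : ℝ => s * log s + (1 - s) * log (1 - s)) = fun s => -binEntropy s := by
    funext s
    simp only [binEntropy, log_inv]
    ring
  rw [h_eq, log_div ht₀ (sub_ne_zero.2 ht₁.symm)]
  exact (hasDerivAt_binEntropy ht₀ ht₁).neg.congr_deriv (by ring)

theorem hasDerivAt_log_div_one_sub {t : ℝ} (ht₀ : t ≠ 0) (ht₁ : t ≠ 1) :
    HasDerivAt (fun s : ℝ => log (s / (1 - s))) (1 / (t * (1 - t))) t := by
  have h₁ : 1 - t ≠ 0 := sub_ne_zero.2 ht₁.symm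
  refine (((hasDerivAt_id' t).fun_div ((hasDerivAt_id' t).const_sub 1) h₁).log
    (div_ne_zero ht₀ h₁)).congr_deriv ?_
  field_simp
  ring

theorem abs_add_le_abs_sub_of_mul_nonpos {a b : ℝ} (h : a * b ≤ 0) : |a + b| ≤ |a - b| :=
  sq_le_sq.1 (by nlinarith)

theorem antivaryOn_log_log_one_sub :
    AntivaryOn log (fun s : ℝ => log (1 - s)) (Ioo 0 1) :=
  (strictMonoOn_log.monotoneOn.mono Ioo_subset_Ioi_self).antivaryOn
    fun _ _ _ hb hab => log_le_log (by linarith [hb.2]) (by linarith)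

theorem abs_log_mul_one_sub_sub_le {y z : ℝ} (hy : y ∈ Ioo 0 1) (hz : z ∈ Ioo 0 1) :
    |log (z * (1 - z)) - log (y * (1 - y))| ≤ |log (z / (1 - z)) - log (y / (1 - y))| := by
  have hy₁ : 1 - y ≠ 0 := by linarith [hy.2]
  have hz₁ : 1 - z ≠ 0 := by linarith [hz.2]
  rw [log_mul hz.1.ne' hz₁, log_mul hy.1.ne' hy₁, log_div hz.1.ne' hz₁, log_div hy.1.ne' hy₁]
  convert abs_add_le_abs_sub_of_mul_nonpos
    (antivaryOn_log_log_one_sub.sub_mul_sub_nonpos hy hz) using 2 <;> ring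

theorem div_le_exp_of_log_sub_log_le {a b δ : ℝ} (ha : 0 < a) (hb : 0 < b)
    (h : log a - log b ≤ δ) : a / b ≤ exp δ := by
  rwa [← log_le_iff_le_exp (div_pos ha hb), log_div ha.ne' hb.ne']

/-- **DKC regularity of the Fermi–Dirac entropy**
`h(t) = t log t + (1 - t) log (1 - t)` on `(0, 1)`: `h'(t) = log (t/(1-t))`,
`h''(t) = 1/(t(1-t))`, and for every `δ > 0` and all `y, z ∈ (0, 1)` with
`|log (z/(1-z)) - log (y/(1-y))| ≤ δ`, one has
`|log (z(1-z)) - log (y(1-y))| ≤ δ`, and consequently `h''(y)/h''(z) ≤ exp δ`. -/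
theorem fermi_dirac_entropy_dkc :
    (∀ t : ℝ, 0 < t → t < 1 →
      HasDerivAt (fun s : ℝ => s * Real.log s + (1 - s) * Real.log (1 - s))
        (Real.log (t / (1 - t))) t) ∧
    (∀ t : ℝ, 0 < t → t < 1 →
      HasDerivAt (fun s : ℝ => Real.log (s / (1 - s))) (1 / (t * (1 - t))) t) ∧
    (∀ δ : ℝ, 0 < δ → ∀ y z : ℝ, 0 < y → y < 1 → 0 < z → z < 1 →
      |Real.log (z / (1 - z)) - Real.log (y / (1 - y))| ≤ δ →
      |Real.log (z * (1 - z)) - Real.log (y * (1 - y))| ≤ δ ∧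
      (1 / (y * (1 - y))) / (1 / (z * (1 - z))) ≤ Real.exp δ) := by
  refine ⟨fun t ht₀ ht₁ => hasDerivAt_mul_log_add_one_sub_mul_log_one_sub ht₀.ne' ht₁.ne,
    fun t ht₀ ht₁ => hasDerivAt_log_div_one_sub ht₀.ne' ht₁.ne,
    fun δ _ y z hy₀ hy₁ hz₀ hz₁ hδ => ?_⟩
  have h_log := (abs_log_mul_one_sub_sub_le ⟨hy₀, hy₁⟩ ⟨hz₀, hz₁⟩).trans hδ
  refine ⟨h_log, ?_⟩
  rw [div_div_div_cancel_left' _ _ one_ne_zero]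
  exact div_le_exp_of_log_sub_log_le (mul_pos hz₀ (by linarith)) (mul_pos hy₀ (by linarith))
    ((le_abs_self _).trans h_log)
end

section
/- Power kernel condition number ratio bound: For all real r ≥ 0, δ ≥ 0, and t ≥ 0, one has ((r + 1)(t + δ)^r + 1)/(t^r + 1) ≤ (r + 1)(1 + δ)^r + 1. -/
/-- **Power kernel condition number ratio bound.** For all real `r ≥ 0`, `δ ≥ 0`,
`t ≥ 0`: `((r+1)(t+δ)^r + 1)/(t^r + 1) ≤ (r+1)(1+δ)^r + 1`, where `^` is the real
power. -/
theorem power_kernel_ratio_bound (r δ t : ℝ) (hr : 0 ≤ r) (hδ : 0 ≤ δ) (ht : 0 ≤ t) :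
    ((r + 1) * (t + δ) ^ r + 1) / (t ^ r + 1) ≤ (r + 1) * (1 + δ) ^ r + 1 := by
  have htr : (0:ℝ) ≤ t ^ r := Real.rpow_nonneg ht r
  have hpos : (0:ℝ) < t ^ r + 1 := by linarith
  have hr1 : (0:ℝ) ≤ r + 1 := by linarith
  have hd1 : (0:ℝ) ≤ (1 + δ) ^ r := Real.rpow_nonneg (by linarith) r
  rw [div_le_iff₀ hpos]
  rcases le_total t 1 with h | h
  · have hb : (t + δ) ^ r ≤ (1 + δ) ^ r :=
      Real.rpow_le_rpow (by linarith) (by linarith) hr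
    nlinarith [mul_nonneg hr1 hd1, mul_nonneg (mul_nonneg hr1 hd1) htr]
  · have hb : (t + δ) ^ r ≤ t ^ r * (1 + δ) ^ r := by
      rw [← Real.mul_rpow ht (by linarith)]
      exact Real.rpow_le_rpow (by linarith) (by nlinarith) hr
    nlinarith [mul_nonneg hr1 hd1, mul_nonneg (mul_nonneg hr1 hd1) htr]
end

section
/- Closedness of DKC regularity under compatible conic combination (single block): Let E be a finite-dimensional real inner product space and h, g : E → ℝ twice continuously differentiable with positive-semidefinite Hessians (⟨∇²h(w)v, v⟩ ≥ 0 and ⟨∇²g(w)v, v⟩ ≥ 0 for all w, v). Assume the compatibility condition ⟨∇h(x) − ∇h(y), ∇g(x) − ∇g(y)⟩ ≥ 0 for all x, y ∈ E. Let α, β > 0 and φ := α·h + β·g. Fix δ > 0 and κ₁, κ₂ ≥ 0, and suppose: for all x, y with ‖∇h(x) − ∇h(y)‖ ≤ δ/α and all unit u, v, ⟨∇²h(x)u, u⟩ ≤ κ₁·⟨∇²h(y)v, v⟩; and for all x, y with ‖∇g(x) − ∇g(y)‖ ≤ δ/β and all unit u, v, ⟨∇²g(x)u, u⟩ ≤ κ₂·⟨∇²g(y)v,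 v⟩. Then for all x, y with ‖∇φ(x) − ∇φ(y)‖ ≤ δ and all unit u, v: ⟨∇²φ(x)u, u⟩ ≤ max(κ₁, κ₂)·⟨∇²φ(y)v, v⟩. -/
open RealInnerProductSpace

/-- **Closedness of DKC regularity under compatible conic combination** (single block).
Let `h, g : E → ℝ` be twice continuously differentiable with gradients `h', g'` and
positive-semidefinite Hessians `h'', g''`, compatible in the sense that
`⟪∇h x - ∇h y, ∇g x - ∇g y⟫ ≥ 0`. For `α, β > 0` and `φ = α h + β g`
(with `∇φ = α ∇h + β ∇g` and `⟪∇²φ(x) u, u⟫ = α ⟪∇²h(x) u, u⟫ + β ⟪∇²g(x) u, u⟫`),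
if `h` satisfies the DKC bound with constant `κ₁` at dual scale `δ/α` and `g` with
constant `κ₂` at dual scale `δ/β`, then `φ` satisfies the DKC bound with constant
`max κ₁ κ₂` at dual scale `δ`. -/
theorem dkc_closed_conic_combination
    {E : Type*} [NormedAddCommGroup E] [InnerProductSpace ℝ E] [FiniteDimensional ℝ E]
    (h g : E → ℝ) (h' g' : E → E) (h'' g'' : E → E →L[ℝ] E)
    (hgrad : ∀ x : E, HasGradientAt h (h' x) x)
    (hhess : ∀ x : E, HasFDerivAt h' (h'' x) x)
    (hcont : Continuous h'')
    (ggrad : ∀ x : E, HasGradientAt g (g' x) x)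
    (ghess : ∀ x : E, HasFDerivAt g' (g'' x) x)
    (gcont : Continuous g'')
    (hpsd : ∀ w v : E, 0 ≤ ⟪h'' w v, v⟫)
    (gpsd : ∀ w v : E, 0 ≤ ⟪g'' w v, v⟫)
    (hcompat : ∀ x y : E, 0 ≤ ⟪h' x - h' y, g' x - g' y⟫)
    (α β : ℝ) (hα : 0 < α) (hβ : 0 < β)
    (δ κ₁ κ₂ : ℝ) (hδ : 0 < δ) (hκ₁ : 0 ≤ κ₁) (hκ₂ : 0 ≤ κ₂)
    (hDKC : ∀ x y : E, ‖h' x - h' y‖ ≤ δ / α →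
      ∀ u v : E, ‖u‖ = 1 → ‖v‖ = 1 → ⟪h'' x u, u⟫ ≤ κ₁ * ⟪h'' y v, v⟫)
    (gDKC : ∀ x y : E, ‖g' x - g' y‖ ≤ δ / β →
      ∀ u v : E, ‖u‖ = 1 → ‖v‖ = 1 → ⟪g'' x u, u⟫ ≤ κ₂ * ⟪g'' y v, v⟫) :
    ∀ x y : E, ‖(α • h' x + β • g' x) - (α • h' y + β • g' y)‖ ≤ δ →
      ∀ u v : E, ‖u‖ = 1 → ‖v‖ = 1 →
        α * ⟪h'' x u, u⟫ + β * ⟪g'' x u, u⟫ ≤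
          max κ₁ κ₂ * (α * ⟪h'' y v, v⟫ + β * ⟪g'' y v, v⟫) := by
  intro x y hxy u v hu hv
  set a := h' x - h' y with ha
  set b := g' x - g' y with hb
  have hsum : α • a + β • b = (α • h' x + β • g' x) - (α • h' y + β • g' y) := by
    simp [ha, hb, smul_sub]; abel
  have hcomp : 0 ≤ ⟪a, b⟫ := hcompat x y
  have hab : 0 ≤ ⟪α • a, β • b⟫ := by
    rw [real_inner_smul_left, real_inner_smul_right]
    positivity
  have hnorm : ‖α • a + β • b‖ ≤ δ := by rw [hsum]; exact hxy
  have key : ∀ p q : E, 0 ≤ ⟪p, q⟫ → ‖p + q‖ ≤ δ → ‖p‖ ≤ δ := by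
    intro p q hpq hle
    have h1 : ‖p + q‖ ^ 2 = ‖p‖ ^ 2 + 2 * ⟪p, q⟫ + ‖q‖ ^ 2 := norm_add_sq_real p q
    nlinarith [norm_nonneg p, norm_nonneg (p + q), norm_nonneg q, sq_nonneg ‖q‖]
  have hna : ‖α • a‖ ≤ δ := key _ _ hab hnorm
  have hnb : ‖β • b‖ ≤ δ := by
    refine key _ _ ?_ (by rwa [add_comm])
    rw [real_inner_comm] at hab; exact hab
  have hna' : ‖a‖ ≤ δ / α := by
    rw [le_div_iff₀ hα, mul_comm]
    calc α * ‖a‖ = ‖α • a‖ := by rw [norm_smul, Real.norm_of_nonneg hα.le]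
    _ ≤ δ := hna
  have hnb' : ‖b‖ ≤ δ / β := by
    rw [le_div_iff₀ hβ, mul_comm]
    calc β * ‖b‖ = ‖β • b‖ := by rw [norm_smul, Real.norm_of_nonneg hβ.le]
    _ ≤ δ := hnb
  have H2 : ⟪h'' x u, u⟫ ≤ max κ₁ κ₂ * ⟪h'' y v, v⟫ :=
    (hDKC x y hna' u v hu hv).trans
      (mul_le_mul_of_nonneg_right (le_max_left _ _) (hpsd y v))
  have G2 : ⟪g'' x u, u⟫ ≤ max κ₁ κ₂ * ⟪g'' y v, v⟫ :=
    (gDKC x y hnb' u v hu hv).trans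
      (mul_le_mul_of_nonneg_right (le_max_right _ _) (gpsd y v))
  nlinarith [hpsd y v, gpsd y v]
end

section
/- Abstract gradient-vanishing lemma: Let (a_k), (s_k), (r_k) be sequences of real numbers with a_k > 0, s_k ≥ 0, r_k ≥ 0 for all k ≥ 1, and let M ≥ 0. Assume: (i) Σ_{k=1}^∞ a_k = ∞; (ii) Σ_{k=1}^∞ a_k·s_k² < ∞; (iii) Σ_{k=1}^∞ r_k²/a_k < ∞; and (iv) |s_j − s_i| ≤ M·Σ_{k=i}^{j−1} r_k for all 1 ≤ i ≤ j. Then s_k → 0 as k → ∞. -/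
open Filter Finset

/-- Sum over a finset of indices all `≥ N` is at most the tail tsum. -/
lemma sum_le_tail_aux (f : ℕ → ℝ) (hf : Summable f) (hnn : ∀ k, 1 ≤ k → 0 ≤ f k)
    {N : ℕ} (hN : 1 ≤ N) (t : Finset ℕ) (ht : ∀ k ∈ t, N ≤ k) :
    ∑ k ∈ t, f k ≤ ∑' k, f (k + N) := by
  classical
  have hinj : ∀ x ∈ t, ∀ y ∈ t, x - N = y - N → x = y := by
    intro x hx y hy h
    have := ht x hx; have := ht y hy; omega
  have hs : ∑ k ∈ t, f k = ∑ j ∈ t.image (· - N), f (j + N) := by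
    rw [Finset.sum_image hinj]
    refine Finset.sum_congr rfl ?_
    intro k hk
    have := ht k hk
    congr 1; omega
  rw [hs]
  exact Summable.sum_le_tsum _ (fun j _ => hnn _ (by omega)) ((summable_nat_add_iff N).2 hf)

/-- **Abstract gradient-vanishing lemma.** Let `a, s, r` be sequences with `a k > 0`,
`s k ≥ 0`, `r k ≥ 0` for `k ≥ 1` and `M ≥ 0`. If (i) `Σ_{k≥1} a k = ∞`,
(ii) `Σ_{k≥1} a k * (s k)² < ∞`, (iii) `Σ_{k≥1} (r k)²/(a k) < ∞`, and
(iv) `|s j - s i| ≤ M * Σ_{k=i}^{j-1} r k` for all `1 ≤ i ≤ j`, then `s k → 0`. -/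
theorem abstract_gradient_vanishing
    (a s r : ℕ → ℝ) (M : ℝ) (hM : 0 ≤ M)
    (ha : ∀ k, 1 ≤ k → 0 < a k)
    (hs : ∀ k, 1 ≤ k → 0 ≤ s k)
    (hr : ∀ k, 1 ≤ k → 0 ≤ r k)
    (hdiv : Filter.Tendsto (fun n => ∑ k ∈ Finset.Icc 1 n, a k)
      Filter.atTop Filter.atTop)
    (hsum₁ : Summable (fun k : ℕ => a (k + 1) * (s (k + 1)) ^ 2))
    (hsum₂ : Summable (fun k : ℕ => (r (k + 1)) ^ 2 / a (k + 1)))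
    (hlip : ∀ i j : ℕ, 1 ≤ i → i ≤ j → |s j - s i| ≤ M * ∑ k ∈ Finset.Ico i j, r k) :
    Filter.Tendsto s Filter.atTop (nhds 0) := by
  classical
  set F : ℕ → ℝ := fun k => a k * s k ^ 2 with hF
  set G : ℕ → ℝ := fun k => r k ^ 2 / a k with hG
  have hFsum : Summable F := (summable_nat_add_iff 1).1 hsum₁
  have hGsum : Summable G := (summable_nat_add_iff 1).1 hsum₂
  have hFnn : ∀ k, 1 ≤ k → 0 ≤ F k := fun k hk =>
    mul_nonneg (ha k hk).le (sq_nonneg _)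
  have hGnn : ∀ k, 1 ≤ k → 0 ≤ G k := fun k hk =>
    div_nonneg (sq_nonneg _) (ha k hk).le
  by_contra hcon
  rw [Metric.tendsto_atTop] at hcon
  push_neg at hcon
  obtain ⟨ε, hε, hfreq⟩ := hcon
  -- Step A: s dips below ε/2 infinitely often
  have hA : ∀ n : ℕ, ∃ q, n < q ∧ s q ≤ ε / 2 := by
    intro n
    by_contra hno
    push_neg at hno
    have hbdd : ∀ m, ∑ k ∈ Finset.Icc 1 m, a k ≤
        (∑ k ∈ Finset.Icc 1 n, a k) + (2 / ε) ^ 2 * ∑' k, F (k + 1) := by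
      intro m
      have htail0 : (0:ℝ) ≤ ∑' k, F (k + 1) :=
        tsum_nonneg fun k => hFnn _ (by omega)
      rcases le_or_gt m n with hmn | hnm
      · have : ∑ k ∈ Finset.Icc 1 m, a k ≤ ∑ k ∈ Finset.Icc 1 n, a k :=
          Finset.sum_le_sum_of_subset_of_nonneg
            (Finset.Icc_subset_Icc le_rfl hmn)
            (fun k hk _ => (ha k (Finset.mem_Icc.1 hk).1).le)
        nlinarith [sq_nonneg (2/ε)]
      · have hsplit : Finset.Icc 1 n ∪ Finset.Ioc n m = Finset.Icc 1 m := by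
          ext k
          simp only [Finset.mem_union, Finset.mem_Icc, Finset.mem_Ioc]
          omega
        have hdisj : Disjoint (Finset.Icc 1 n) (Finset.Ioc n m) := by
          simp [Finset.disjoint_left, Finset.mem_Icc, Finset.mem_Ioc]
          omega
        have hsum : ∑ k ∈ Finset.Icc 1 m, a k =
            (∑ k ∈ Finset.Icc 1 n, a k) + ∑ k ∈ Finset.Ioc n m, a k := by
          rw [← hsplit, Finset.sum_union hdisj]
        have h1 : ∑ k ∈ Finset.Ioc n m, a k ≤
            (2 / ε) ^ 2 * ∑ k ∈ Finset.Ioc n m, F k := by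
          rw [Finset.mul_sum]
          refine Finset.sum_le_sum fun k hk => ?_
          have hk' := Finset.mem_Ioc.1 hk
          have hsk := hno k hk'.1
          have hak := ha k (by omega)
          have h0 : (0:ℝ) ≤ ε/2 := by positivity
          have hss : (ε/2) ^ 2 ≤ s k ^ 2 := pow_le_pow_left₀ h0 hsk.le 2
          have hmul : a k * (ε/2) ^ 2 ≤ a k * s k ^ 2 :=
            mul_le_mul_of_nonneg_left hss hak.le
          have hne : ε ≠ 0 := ne_of_gt hε
          calc a k = (2/ε) ^ 2 * (a k * (ε/2) ^ 2) := by field_simp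
            _ ≤ (2/ε) ^ 2 * (a k * s k ^ 2) :=
              mul_le_mul_of_nonneg_left hmul (sq_nonneg _)
            _ = (2/ε) ^ 2 * F k := rfl
        have h2 : ∑ k ∈ Finset.Ioc n m, F k ≤ ∑' k, F (k + 1) :=
          sum_le_tail_aux F hFsum hFnn le_rfl _
            (fun k hk => by have := (Finset.mem_Ioc.1 hk).1; omega)
        have h3 : (0:ℝ) ≤ (2/ε)^2 := sq_nonneg _
        nlinarith
    obtain ⟨m, hm⟩ := (hdiv.eventually (eventually_gt_atTop
      ((∑ k ∈ Finset.Icc 1 n, a k) + (2 / ε) ^ 2 * ∑' k, F (k + 1)))).exists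
    exact absurd (hbdd m) (not_le.2 hm)
  -- tails go to zero
  have hT1 : Tendsto (fun i => ∑' k, F (k + i)) atTop (nhds 0) := tendsto_sum_nat_add F
  have hT2 : Tendsto (fun i => ∑' k, G (k + i)) atTop (nhds 0) := tendsto_sum_nat_add G
  have hprod : Tendsto
      (fun N => M ^ 2 * (∑' k, G (k + N)) * ((2 / ε) ^ 2 * ∑' k, F (k + N)))
      atTop (nhds 0) := by
    have := (hT2.const_mul (M ^ 2)).mul (hT1.const_mul ((2 / ε) ^ 2))
    simpa using this
  have hpos : (0:ℝ) < (ε / 2) ^ 2 := by positivity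
  obtain ⟨N₀, hN₀⟩ := eventually_atTop.1 (hprod.eventually (gt_mem_nhds hpos))
  set N := max N₀ 1 with hNdef
  have hN1 : 1 ≤ N := le_max_right _ _
  have hsmall : M ^ 2 * (∑' k, G (k + N)) * ((2 / ε) ^ 2 * ∑' k, F (k + N))
      < (ε / 2) ^ 2 := hN₀ N (le_max_left _ _)
  -- pick n ≥ N with s n ≥ ε
  obtain ⟨n, hnN, hsn⟩ := hfreq N
  have hn1 : 1 ≤ n := le_trans hN1 hnN
  have hsn' : ε ≤ s n := by
    rwa [Real.dist_eq, sub_zero, abs_of_nonneg (hs n hn1)] at hsn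
  -- pick the first q > n with s q ≤ ε/2
  obtain ⟨q, hq⟩ := hA n
  have hex : ∃ q, n < q ∧ s q ≤ ε / 2 := ⟨q, hq⟩
  set q₀ := Nat.find hex with hq₀def
  obtain ⟨hnq₀, hsq₀⟩ := Nat.find_spec hex
  have hmid : ∀ k ∈ Finset.Ico n q₀, ε / 2 ≤ s k := by
    intro k hk
    obtain ⟨hk1, hk2⟩ := Finset.mem_Ico.1 hk
    rcases eq_or_lt_of_le hk1 with rfl | hlt
    · linarith
    · have := Nat.find_min hex hk2
      push_neg at this
      exact (this hlt).le
  -- the crossing inequality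
  have hcross : ε / 2 ≤ M * ∑ k ∈ Finset.Ico n q₀, r k := by
    have h := hlip n q₀ hn1 hnq₀.le
    have : s n - s q₀ ≤ |s q₀ - s n| := by rw [abs_sub_comm]; exact le_abs_self _
    linarith
  -- Cauchy–Schwarz
  have hCS : (∑ k ∈ Finset.Ico n q₀, r k) ^ 2 ≤
      (∑ k ∈ Finset.Ico n q₀, G k) * (∑ k ∈ Finset.Ico n q₀, a k) := by
    have key := sum_mul_sq_le_sq_mul_sq (Finset.Ico n q₀)
      (fun k => r k / Real.sqrt (a k)) (fun k => Real.sqrt (a k))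
    have h1 : ∑ k ∈ Finset.Ico n q₀, (r k / Real.sqrt (a k)) * Real.sqrt (a k)
        = ∑ k ∈ Finset.Ico n q₀, r k := by
      refine Finset.sum_congr rfl fun k hk => ?_
      have hak := ha k (by have := (Finset.mem_Ico.1 hk).1; omega)
      field_simp [Real.sqrt_ne_zero'.2 hak]
    have h2 : ∑ k ∈ Finset.Ico n q₀, (r k / Real.sqrt (a k)) ^ 2
        = ∑ k ∈ Finset.Ico n q₀, G k := by
      refine Finset.sum_congr rfl fun k hk => ?_
      have hak := ha k (by have := (Finset.mem_Ico.1 hk).1; omega)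
      rw [div_pow, Real.sq_sqrt hak.le, hG]
    have h3 : ∑ k ∈ Finset.Ico n q₀, (Real.sqrt (a k)) ^ 2
        = ∑ k ∈ Finset.Ico n q₀, a k := by
      refine Finset.sum_congr rfl fun k hk => ?_
      have hak := ha k (by have := (Finset.mem_Ico.1 hk).1; omega)
      rw [Real.sq_sqrt hak.le]
    rw [h1, h2, h3] at key
    exact key
  -- tail bounds
  have hGle : ∑ k ∈ Finset.Ico n q₀, G k ≤ ∑' k, G (k + N) :=
    sum_le_tail_aux G hGsum hGnn hN1 _
      (fun k hk => le_trans hnN (Finset.mem_Ico.1 hk).1)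
  have haleF : ∑ k ∈ Finset.Ico n q₀, a k ≤
      (2 / ε) ^ 2 * ∑ k ∈ Finset.Ico n q₀, F k := by
    rw [Finset.mul_sum]
    refine Finset.sum_le_sum fun k hk => ?_
    have hsk := hmid k hk
    have hak := ha k (by have := (Finset.mem_Ico.1 hk).1; omega)
    have h0 : (0:ℝ) ≤ ε/2 := by positivity
    have hss : (ε/2) ^ 2 ≤ s k ^ 2 := pow_le_pow_left₀ h0 hsk 2
    have hmul : a k * (ε/2) ^ 2 ≤ a k * s k ^ 2 :=
      mul_le_mul_of_nonneg_left hss hak.le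
    have hne : ε ≠ 0 := ne_of_gt hε
    calc a k = (2/ε) ^ 2 * (a k * (ε/2) ^ 2) := by field_simp
      _ ≤ (2/ε) ^ 2 * (a k * s k ^ 2) :=
        mul_le_mul_of_nonneg_left hmul (sq_nonneg _)
      _ = (2/ε) ^ 2 * F k := rfl
  have hFle : ∑ k ∈ Finset.Ico n q₀, F k ≤ ∑' k, F (k + N) :=
    sum_le_tail_aux F hFsum hFnn hN1 _
      (fun k hk => le_trans hnN (Finset.mem_Ico.1 hk).1)
  -- combine
  have hGnn' : (0:ℝ) ≤ ∑ k ∈ Finset.Ico n q₀, G k :=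
    Finset.sum_nonneg fun k hk => hGnn k (by have := (Finset.mem_Ico.1 hk).1; omega)
  have hann' : (0:ℝ) ≤ ∑ k ∈ Finset.Ico n q₀, a k :=
    Finset.sum_nonneg fun k hk => (ha k (by have := (Finset.mem_Ico.1 hk).1; omega)).le
  have hrnn' : (0:ℝ) ≤ ∑ k ∈ Finset.Ico n q₀, r k :=
    Finset.sum_nonneg fun k hk => hr k (by have := (Finset.mem_Ico.1 hk).1; omega)
  have hTGnn : (0:ℝ) ≤ ∑' k, G (k + N) := tsum_nonneg fun k => hGnn _ (by omega)
  have hTFnn : (0:ℝ) ≤ ∑' k, F (k + N) := tsum_nonneg fun k => hFnn _ (by omega)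
  have hsq : (ε / 2) ^ 2 ≤ (M * ∑ k ∈ Finset.Ico n q₀, r k) ^ 2 := by
    have h0 : (0:ℝ) ≤ ε / 2 := by positivity
    nlinarith
  have hfinal : (M * ∑ k ∈ Finset.Ico n q₀, r k) ^ 2 ≤
      M ^ 2 * (∑' k, G (k + N)) * ((2 / ε) ^ 2 * ∑' k, F (k + N)) := by
    have h1 : (M * ∑ k ∈ Finset.Ico n q₀, r k) ^ 2
        = M ^ 2 * (∑ k ∈ Finset.Ico n q₀, r k) ^ 2 := by ring
    have h2 : ∑ k ∈ Finset.Ico n q₀, a k ≤ (2 / ε) ^ 2 * ∑' k, F (k + N) := by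
      refine haleF.trans ?_
      have : (0:ℝ) ≤ (2/ε)^2 := sq_nonneg _
      nlinarith
    rw [h1]
    have hM2 : (0:ℝ) ≤ M ^ 2 := sq_nonneg _
    have step : (∑ k ∈ Finset.Ico n q₀, r k) ^ 2 ≤
        (∑' k, G (k + N)) * ((2 / ε) ^ 2 * ∑' k, F (k + N)) := by
      refine hCS.trans ?_
      have hF2 : (0:ℝ) ≤ (2 / ε) ^ 2 * ∑' k, F (k + N) := by positivity
      exact mul_le_mul hGle h2 hann' hTGnn
    calc M ^ 2 * (∑ k ∈ Finset.Ico n q₀, r k) ^ 2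
        ≤ M ^ 2 * ((∑' k, G (k + N)) * ((2 / ε) ^ 2 * ∑' k, F (k + N))) :=
          mul_le_mul_of_nonneg_left step hM2
      _ = M ^ 2 * (∑' k, G (k + N)) * ((2 / ε) ^ 2 * ∑' k, F (k + N)) := by ring
  linarith
end

section
/- Deterministic stochastic-error bound for one epoch: Let E be a real inner product space, n ≥ 1, α > 0, G ≥ 0, L > 0, κ ≥ 1, X ⊆ E, and f_1, …, f_n : E → ℝ differentiable. Assume: (i) ‖∇f_i(u)‖ ≤ G for all u ∈ X and all i; (ii) the dual Lipschitz bound ‖∇f_i(u) − ∇f_i(v)‖² ≤ κ·L²·‖∇h(u) − ∇h(v)‖² for all u, v ∈ X and all i, where h : E → ℝ is differentiable with gradient ∇h. Let σ be a permutation of {1, …, n} and let y¹, …, y^{n+1} ∈ X satisfy y¹ = x ∈ X and ∇h(y^{i+1}) = ∇h(y^i) − α·∇f_{σ(i)}(y^i) for i = 1, …, n. Then Σ_{i=1}^n ‖∇f_{σ(i)}(x) − ∇f_{σ(i)}(y^i)‖² ≤ κ·L²·G²·n³·α². -/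
open RealInnerProductSpace

/-- **Deterministic stochastic-error bound for one epoch.** If the component gradients
are bounded by `G` on `X` and satisfy the dual Lipschitz bound
`‖∇f_i u - ∇f_i v‖² ≤ κ L² ‖∇h u - ∇h v‖²` on `X`, then one epoch of mirror descent
through the data in the order given by a permutation `σ`, i.e.
`∇h (y (i+1)) = ∇h (y i) - α • ∇f_{σ i} (y i)` starting from `y 0 = x ∈ X` with all
iterates in `X`, satisfies
`Σ_i ‖∇f_{σ i} x - ∇f_{σ i} (y i)‖² ≤ κ L² G² n³ α²`. -/
theorem one_epoch_stochastic_error_bound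
    {E : Type*} [NormedAddCommGroup E] [InnerProductSpace ℝ E] [CompleteSpace E]
    (n : ℕ) (hn : 1 ≤ n) (α G L κ : ℝ)
    (hα : 0 < α) (hG : 0 ≤ G) (hL : 0 < L) (hκ : 1 ≤ κ)
    (X : Set E)
    (fs : Fin n → E → ℝ) (fs' : Fin n → E → E)
    (hfsgrad : ∀ i : Fin n, ∀ x : E, HasGradientAt (fs i) (fs' i x) x)
    (h : E → ℝ) (h' : E → E)
    (hhgrad : ∀ x : E, HasGradientAt h (h' x) x)
    (hbddgrad : ∀ i : Fin n, ∀ u ∈ X, ‖fs' i u‖ ≤ G)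
    (hdual : ∀ i : Fin n, ∀ u ∈ X, ∀ v ∈ X,
      ‖fs' i u - fs' i v‖ ^ 2 ≤ κ * L ^ 2 * ‖h' u - h' v‖ ^ 2)
    (σ : Equiv.Perm (Fin n)) (x : E) (hx : x ∈ X)
    (y : ℕ → E) (hy0 : y 0 = x)
    (hyX : ∀ i : ℕ, i ≤ n → y i ∈ X)
    (hupd : ∀ i : Fin n,
      h' (y ((i : ℕ) + 1)) = h' (y (i : ℕ)) - α • fs' (σ i) (y (i : ℕ))) :
    ∑ i : Fin n, ‖fs' (σ i) x - fs' (σ i) (y (i : ℕ))‖ ^ 2 ≤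
      κ * L ^ 2 * G ^ 2 * (n : ℝ) ^ 3 * α ^ 2 := by
  -- drift bound in the dual space
  have hdrift : ∀ i : ℕ, i ≤ n → ‖h' (y i) - h' x‖ ≤ α * G * i := by
    intro i
    induction i with
    | zero => intro _; simp [hy0]
    | succ i ih =>
      intro hle
      have hi : i < n := Nat.lt_of_succ_le hle
      have := hupd ⟨i, hi⟩
      simp only [Fin.val_mk] at this
      have hb := hbddgrad (σ ⟨i, hi⟩) (y i) (hyX i hi.le)
      have heq : h' (y (i + 1)) - h' x = (h' (y i) - h' x) - α • fs' (σ ⟨i, hi⟩) (y i) := by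
        rw [this]; abel
      calc ‖h' (y (i + 1)) - h' x‖
          = ‖(h' (y i) - h' x) - α • fs' (σ ⟨i, hi⟩) (y i)‖ := by rw [heq]
        _ ≤ ‖h' (y i) - h' x‖ + ‖α • fs' (σ ⟨i, hi⟩) (y i)‖ := norm_sub_le _ _
        _ ≤ α * G * i + α * G := by
            have h1 : ‖α • fs' (σ ⟨i, hi⟩) (y i)‖ ≤ α * G := by
              rw [norm_smul, Real.norm_eq_abs, abs_of_pos hα]
              exact mul_le_mul_of_nonneg_left hb hα.le
            exact add_le_add (ih hi.le) h1
        _ = α * G * (i + 1 : ℕ) := by push_cast; ring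
  have key : ∀ i : Fin n,
      ‖fs' (σ i) x - fs' (σ i) (y (i : ℕ))‖ ^ 2 ≤ κ * L ^ 2 * (α * G * n) ^ 2 := by
    intro i
    have hyi : y (i : ℕ) ∈ X := hyX _ i.isLt.le
    have hd := hdual (σ i) x hx (y (i : ℕ)) hyi
    have hnorm : ‖h' x - h' (y (i : ℕ))‖ ≤ α * G * n := by
      rw [norm_sub_rev]
      refine (hdrift _ i.isLt.le).trans ?_
      have hin : (i : ℝ) ≤ (n : ℝ) := by exact_mod_cast i.isLt.le
      have : α * G * (i : ℝ) ≤ α * G * n :=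
        mul_le_mul_of_nonneg_left hin (by positivity)
      linarith
    have hsq : ‖h' x - h' (y (i : ℕ))‖ ^ 2 ≤ (α * G * n) ^ 2 := by
      have := norm_nonneg (h' x - h' (y (i : ℕ)))
      nlinarith
    have hκL : (0:ℝ) ≤ κ * L ^ 2 := by positivity
    nlinarith
  calc ∑ i : Fin n, ‖fs' (σ i) x - fs' (σ i) (y (i : ℕ))‖ ^ 2
      ≤ ∑ _i : Fin n, κ * L ^ 2 * (α * G * n) ^ 2 :=
        Finset.sum_le_sum fun i _ => key i
    _ = n * (κ * L ^ 2 * (α * G * n) ^ 2) := by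
        rw [Finset.sum_const, Finset.card_univ, Fintype.card_fin, nsmul_eq_mul]
    _ = κ * L ^ 2 * G ^ 2 * (n : ℝ) ^ 3 * α ^ 2 := by ring
end
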